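/- Let M₁ and M₂ be simple matroids such that neither is totally disconnected. If φ : B_f(M₁) → B_f(M₂) is an isomorphism of fans, then φ is induced by a matroid isomorphism f : M₁ → M₂, i.e. φ sends the class of v_i to the class of v_{f(i)} for all i in the ground set of M₁. -/

import Mathlib

open Set Function
open scoped Matroid Classical

namespace BergmanFans

variable {α β γ : Type*}

/-! ### Matroid notions -/

/-- A circuit of a matroid: a minimal dependent set. -/
def Circuit (M : Matroid α) (C : Set α) : Prop :=
  M.Dep C ∧ ∀ D, D ⊂ C → M.Indep D

/-- The rank of a subset: the largest cardinality of an independent subset. -/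
noncomputable def rkSet (M : Matroid α) (X : Set α) : ℕ :=
  sSup {n | ∃ I, I ⊆ X ∧ M.Indep I ∧ I.ncard = n}

/-- The rank of a matroid. -/
noncomputable def rk (M : Matroid α) : ℕ := rkSet M M.E

/-- A matroid is loopfree if every singleton of the ground set is independent. -/
def Loopfree (M : Matroid α) : Prop := ∀ i ∈ M.E, M.Indep {i}

/-- A matroid is simple if it has no loops and no parallel pairs. -/
def Simple (M : Matroid α) : Prop := ∀ i ∈ M.E, ∀ j ∈ M.E, M.Indep {i, j}

/-- Two elements are related if they are equal or lie on a common circuit. -/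
def ConnRel (M : Matroid α) (i j : α) : Prop :=
  i = j ∨ ∃ C, Circuit M C ∧ i ∈ C ∧ j ∈ C

/-- The connected component of an element. -/
def component (M : Matroid α) (i : α) : Set α := {j ∈ M.E | ConnRel M i j}

/-- A matroid is connected if all pairs of elements of the ground set lie on common
circuits. -/
def Connected (M : Matroid α) : Prop :=
  M.E.Nonempty ∧ ∀ i ∈ M.E, ∀ j ∈ M.E, ConnRel M i j

/-- A matroid is totally disconnected if every connected component has rank at most one. -/
def TotallyDisconnected (M : Matroid α) : Prop :=
  ∀ i ∈ M.E, rkSet M (component M i) ≤ 1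

/-- Contraction of a set, defined by duality. -/
noncomputable def contract (M : Matroid α) (C : Set α) : Matroid α := (M✶ ↾ (M.E \ C))✶

/-- A matroid isomorphism along a bijection of the underlying types. -/
def IsMatroidIso (M₁ : Matroid α) (M₂ : Matroid β) (f : α ≃ β) : Prop :=
  f '' M₁.E = M₂.E ∧ ∀ I, I ⊆ M₁.E → (M₁.Indep I ↔ M₂.Indep (f '' I))

/-- `M` is the parallel connection of `N₁` and `N₂` along `p`, described via circuits. -/
def IsParallelConnAt (M N₁ N₂ : Matroid γ) (p : γ) : Prop :=
  N₁.E ∪ N₂.E = M.E ∧ N₁.E ∩ N₂.E = {p} ∧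
  ∀ C, Circuit M C ↔ (Circuit N₁ C ∨ Circuit N₂ C ∨
    ∃ C₁ C₂, Circuit N₁ C₁ ∧ Circuit N₂ C₂ ∧ p ∈ C₁ ∧ p ∈ C₂ ∧ C = (C₁ ∪ C₂) \ {p})

/-- `M` is a non-trivial parallel connection along `p`. -/
def IsNontrivParallelConnAt (M : Matroid γ) (p : γ) : Prop :=
  ∃ N₁ N₂, IsParallelConnAt M N₁ N₂ p ∧ 2 ≤ rk N₁ ∧ 2 ≤ rk N₂

/-- `M` is a non-trivial parallel connection. -/
def IsNontrivParallelConn (M : Matroid γ) : Prop := ∃ p, IsNontrivParallelConnAt M p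

/-- `M` is the parallel connection of matroids `M₁`, `M₂` on other ground types, glued
along `p₁ ∈ E(M₁)` and `p₂ ∈ E(M₂)` via the injections `g₁`, `g₂`. -/
def IsParallelConnEmb (M : Matroid γ) (M₁ : Matroid α) (M₂ : Matroid β)
    (g₁ : α → γ) (g₂ : β → γ) (p₁ : α) (p₂ : β) : Prop :=
  Injective g₁ ∧ Injective g₂ ∧ range g₁ ∪ range g₂ = univ ∧
    range g₁ ∩ range g₂ = {g₁ p₁} ∧ g₁ p₁ = g₂ p₂ ∧
    ∀ C, Circuit M C ↔
      ((∃ C₁, Circuit M₁ C₁ ∧ C = g₁ '' C₁) ∨ (∃ C₂, Circuit M₂ C₂ ∧ C = g₂ '' C₂) ∨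
        (∃ C₁ C₂, Circuit M₁ C₁ ∧ Circuit M₂ C₂ ∧ p₁ ∈ C₁ ∧ p₂ ∈ C₂ ∧
          C = (g₁ '' C₁ ∪ g₂ '' C₂) \ {g₁ p₁}))

/-! ### The ambient space `ℝ^E/ℝ𝟙` and its lattice -/

variable (α) [Fintype α]

/-- The line `ℝ𝟙 ⊆ ℝ^E`. -/
noncomputable def lineSub : Submodule ℝ (α → ℝ) := Submodule.span ℝ {fun _ => (1 : ℝ)}

/-- The ambient space `ℝ^E/ℝ𝟙`. -/
abbrev Amb := (α → ℝ) ⧸ lineSub α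

/-- The quotient map `ℝ^E → ℝ^E/ℝ𝟙`. -/
noncomputable def proj : (α → ℝ) →ₗ[ℝ] Amb α := (lineSub α).mkQ

/-- The lattice `ℤ^E/ℤ𝟙` inside `ℝ^E/ℝ𝟙`. -/
noncomputable def intLatt : Set (Amb α) :=
  proj α '' {x | ∀ i, ∃ n : ℤ, x i = (n : ℝ)}

variable {α}

/-- The indicator vector `v_S ∈ ℝ^E` of a subset `S ⊆ E`. -/
noncomputable def indic (S : Set α) : α → ℝ := S.indicator 1

/-! ### Fans and their isomorphisms -/

variable {V W : Type*} [AddCommGroup V] [Module ℝ V] [AddCommGroup W] [Module ℝ W]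

/-- A linear map induced by an isomorphism of the lattices `LV`, `LW`. -/
def IsLatticeLinearIso (LV : Set V) (LW : Set W) (φ : V →ₗ[ℝ] W) : Prop :=
  Function.Bijective φ ∧ φ '' LV = LW

/-- `φ` is an isomorphism of the fans `S₁`, `S₂` (viewed as their collections of cones)
with respect to the lattices `LV`, `LW`: it is induced by a lattice isomorphism, maps cones
to cones, and its inverse maps cones to cones. -/
def IsFanIso (LV : Set V) (LW : Set W) (φ : V →ₗ[ℝ] W)
    (S₁ : Set (Set V)) (S₂ : Set (Set W)) : Prop :=
  IsLatticeLinearIso LV LW φ ∧ (∀ σ ∈ S₁, φ '' σ ∈ S₂) ∧ ∀ τ ∈ S₂, φ ⁻¹' τ ∈ S₁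

/-- The ray spanned by a vector. -/
def rayOf (u : V) : Set V := {x | ∃ t : ℝ, 0 ≤ t ∧ x = t • u}

/-- The product of two fans. -/
def prodFan (S₁ : Set (Set V)) (S₂ : Set (Set W)) : Set (Set (V × W)) :=
  {σ | ∃ σ₁ ∈ S₁, ∃ σ₂ ∈ S₂, σ = σ₁ ×ˢ σ₂}

/-! ### Bergman fans -/

/-- The affine Bergman fan: the set of `x` such that for every circuit `C` the minimum of
the values of `x` on `C` is attained at least twice. -/
def affBergman (M : Matroid α) : Set (α → ℝ) :=
  {x | ∀ C, Circuit M C → ∃ i ∈ C, ∃ j ∈ C, i ≠ j ∧ x i = x j ∧ ∀ k ∈ C, x i ≤ x k}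

/-- The projective Bergman fan `B(M) ⊆ ℝ^E/ℝ𝟙`, as a set. -/
noncomputable def projBergman (M : Matroid α) : Set (Amb α) := proj α '' affBergman M

/-- A proper nonempty flat. -/
def ProperFlat (M : Matroid α) (F : Set α) : Prop := M.IsFlat F ∧ F.Nonempty ∧ F ≠ M.E

/-- The cone spanned by the classes of the indicator vectors of a finite collection of
subsets of the ground set. -/
noncomputable def flagCone (𝒞 : Finset (Set α)) : Set (Amb α) :=
  {x | ∃ c : Set α → ℝ, (∀ F, 0 ≤ c F) ∧ x = ∑ F ∈ 𝒞, c F • proj α (indic F)}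

/-- The fine fan structure on the Bergman fan: cones are spanned by flags of proper
nonempty flats. -/
noncomputable def fineFan (M : Matroid α) : Set (Set (Amb α)) :=
  {σ | ∃ 𝒞 : Finset (Set α), IsChain (· ⊆ ·) (𝒞 : Set (Set α)) ∧
    (∀ F ∈ 𝒞, ProperFlat M F) ∧ σ = flagCone 𝒞}

/-- The `w`-weight of a subset. -/
noncomputable def wt (w : α → ℝ) (B : Set α) : ℝ := ∑ i, B.indicator w i

/-- The set of bases of `M` of minimal `w`-weight: the face of the matroid polytope
selected by `w`. -/
noncomputable def minBases (M : Matroid α) (w : α → ℝ) : Set (Set α) :=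
  {B | M.IsBase B ∧ ∀ B', M.IsBase B' → wt w B ≤ wt w B'}

/-- The closed normal cone of the face of the matroid polytope selected by `w₀`. -/
noncomputable def normalCone (M : Matroid α) (w₀ : α → ℝ) : Set (α → ℝ) :=
  {w | minBases M w₀ ⊆ minBases M w}

/-- The coarse fan structure on the Bergman fan: the cones of the normal fan of the
matroid polytope whose support lies in the Bergman fan. -/
noncomputable def coarseFan (M : Matroid α) : Set (Set (Amb α)) :=
  {σ | ∃ w₀ : α → ℝ, normalCone M w₀ ⊆ affBergman M ∧ σ = proj α '' normalCone M w₀}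

/-! ### Cremona maps -/

/-- The image of the basis vector `v_k` under the Cremona map of the basis `b`. -/
noncomputable def cremTarget (M : Matroid α) (b : Set α) (k : α) : α → ℝ :=
  if k ∈ b then indic (M.closure (b \ {k})) else indic {k}

/-- The affine Cremona map associated to a basis `b` of `M`: it sends `v_k ↦ v_{cl(b\k)}`
for `k ∈ b` and fixes `v_k` for `k ∉ b`. -/
noncomputable def cremAff (M : Matroid α) (b : Set α) : (α → ℝ) →ₗ[ℝ] (α → ℝ) where
  toFun x := ∑ k, x k • cremTarget M b k
  map_add' x y := by
    simp [add_smul, Finset.sum_add_distrib]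
  map_smul' c x := by
    simp [smul_smul, Finset.smul_sum]

end BergmanFans


/-!
An isomorphism of fine fans maps rays to rays, and since it preserves the lattice and each
ray of `B_f(M)` is spanned by the primitive vector `v_F` of a flat, it maps `v_F` to a positive
integer multiple of some `v_H`; applying the same to the inverse shows that the multiple is `1`.
The cone of a pair of nested flats is mapped to a cone, so nested flats go to nested flats. For
the images `φ v_i = v_{A i}` and `φ⁻¹ v_j = v_{B j}` of the points, this gives
`j ∈ A i ↔ i ∈ B j`. Expanding `v_i = φ⁻¹ v_{A i} = ∑_{j ∈ A i} v_{B j}` modulo `𝟙` then gives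
`|A i ∩ A k| + 1 = |A i|` for `i ≠ k`, and symmetrically for the sets `B j`. Double counting
leaves two cases: either every `A i` is a single point, and the resulting bijection maps flats
onto flats, hence is a matroid isomorphism; or every `A i` is the complement of a point, so all
complements of points are flats of `M₂`, which then has no circuits and is totally disconnected.
-/

namespace BergmanFans

open scoped Finset

section Quotient

variable {α : Type*}

lemma indic_apply (S : Set α) (k : α) : indic S k = if k ∈ S then 1 else 0 := by
  simp [indic, Set.indicator_apply]

lemma sub_eq_sub_of_proj_eq_proj {x y : α → ℝ} (h : proj α x = proj α y) (j k : α) :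
    x j - x k = y j - y k := by
  obtain ⟨a, ha⟩ := Submodule.mem_span_singleton.mp ((Submodule.Quotient.eq _).mp h)
  have hj := congrFun ha j
  have hk := congrFun ha k
  simp only [Pi.smul_apply, smul_eq_mul, mul_one, Pi.sub_apply] at hj hk
  linarith

lemma eq_of_proj_indic_eq_proj_indic {S T : Set α} (hS : S.Nonempty) (hS' : S ≠ univ)
    (h : proj α (indic S) = proj α (indic T)) : S = T := by
  obtain ⟨j₀, hj₀⟩ := hS
  obtain ⟨k₀, hk₀⟩ := (ne_univ_iff_exists_notMem S).mp hS'
  have key : ∀ j ∈ S, ∀ k ∉ S, j ∈ T ∧ k ∉ T := by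
    intro j hj k hk
    have := sub_eq_sub_of_proj_eq_proj h j k
    simp only [indic_apply, hj, hk, if_true, if_false] at this
    split_ifs at this <;> first | exact ⟨‹_›, ‹_›⟩ | norm_num at this
  ext x
  by_cases hx : x ∈ S
  · simp [hx, (key x hx k₀ hk₀).1]
  · simp [hx, (key j₀ hj₀ x hx).2]

lemma proj_indic_ne_zero {S : Set α} (hS : S.Nonempty) (hS' : S ≠ univ) :
    proj α (indic S) ≠ 0 := by
  intro h
  refine hS.ne_empty (eq_of_proj_indic_eq_proj_indic hS hS' (h.trans ?_))
  rw [show indic (∅ : Set α) = 0 by simp [indic]; rfl, map_zero]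

lemma le_one_of_proj_indic_eq_smul {S T : Set α} (hT : T.Nonempty) (hT' : T ≠ univ) {a : ℝ}
    (h : proj α (indic S) = a • proj α (indic T)) : a ≤ 1 := by
  obtain ⟨j, hj⟩ := hT
  obtain ⟨k, hk⟩ := (ne_univ_iff_exists_notMem T).mp hT'
  rw [← map_smul] at h
  have := sub_eq_sub_of_proj_eq_proj h j k
  simp only [Pi.smul_apply, smul_eq_mul, indic_apply, hj, hk, if_true, if_false] at this
  split_ifs at this <;> linarith

lemma one_le_of_smul_proj_indic_mem_intLatt {H : Set α} (hH : H.Nonempty) (hH' : H ≠ univ)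
    {t : ℝ} (ht : 0 < t) (hmem : t • proj α (indic H) ∈ intLatt α) : 1 ≤ t := by
  obtain ⟨j, hj⟩ := hH
  obtain ⟨k, hk⟩ := (ne_univ_iff_exists_notMem H).mp hH'
  obtain ⟨y, hy, hyH⟩ := hmem
  rw [← map_smul] at hyH
  have := sub_eq_sub_of_proj_eq_proj hyH j k
  simp only [Pi.smul_apply, smul_eq_mul, indic_apply, hj, hk, if_true, if_false] at this
  obtain ⟨m, hm⟩ := hy j
  obtain ⟨n, hn⟩ := hy k
  have htmn : t = ((m - n : ℤ) : ℝ) := by push_cast; linarith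
  rw [htmn] at ht ⊢
  exact_mod_cast (Int.cast_pos.mp ht : 0 < m - n)

lemma proj_indic_eq_sum [Fintype α] (S : Set α) :
    proj α (indic S) = ∑ i ∈ S.toFinset, proj α (indic {i}) := by
  rw [← map_sum]
  congr 1
  ext k
  simp [indic_apply, Finset.sum_apply]

lemma sum_indic_apply {ι : Type*} (T : Finset ι) (S : ι → Set α) (k : α) :
    (∑ j ∈ T, indic (S j)) k = #{j ∈ T | k ∈ S j} := by
  simp [Finset.sum_apply, indic_apply, Finset.sum_boole]

lemma proj_indic_mem_intLatt (S : Set α) : proj α (indic S) ∈ intLatt α := by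
  refine ⟨indic S, fun i => ?_, rfl⟩
  by_cases hi : i ∈ S
  · exact ⟨1, by simp [indic_apply, hi]⟩
  · exact ⟨0, by simp [indic_apply, hi]⟩

end Quotient

section Cones

variable {α : Type*}

lemma mem_flagCone_of_mem {𝒞 : Finset (Set α)} {F : Set α} (hF : F ∈ 𝒞) :
    proj α (indic F) ∈ flagCone 𝒞 :=
  ⟨fun G => if G = F then 1 else 0, fun _ => ite_nonneg zero_le_one le_rfl, by
    simp [ite_smul, Finset.sum_ite_eq', hF]⟩

lemma flagCone_singleton (F : Set α) :
    flagCone {F} = {x | ∃ t : ℝ, 0 ≤ t ∧ x = t • proj α (indic F)} := by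
  ext x
  constructor
  · rintro ⟨c, hc, rfl⟩
    exact ⟨c F, hc F, Finset.sum_singleton _ _⟩
  · rintro ⟨t, ht, rfl⟩
    exact ⟨fun _ => t, fun _ => ht, (Finset.sum_singleton _ _).symm⟩

lemma mem_of_forall_exists_mem_notMem {𝒞 : Finset (Set α)}
    (hc : IsChain (· ⊆ ·) (𝒞 : Set (Set α))) {H : Set α} (hH : H.Nonempty) (hH' : H ≠ univ)
    (hsep : ∀ j ∈ H, ∀ k ∉ H, ∃ F ∈ 𝒞, j ∈ F ∧ k ∉ F) : H ∈ 𝒞 := by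
  obtain ⟨k₀, hk₀⟩ := (ne_univ_iff_exists_notMem H).mp hH'
  -- the least member of `𝒞` containing a point of `H` is contained in `H`
  have hleast : ∀ j ∈ H, ∃ F ∈ 𝒞, j ∈ F ∧ F ⊆ H := by
    intro j hj
    obtain ⟨F₀, hF₀, hjF₀, -⟩ := hsep j hj k₀ hk₀
    obtain ⟨F, hFj, hmin⟩ :=
      (𝒞.filter (j ∈ ·)).exists_minimal ⟨F₀, Finset.mem_filter.mpr ⟨hF₀, hjF₀⟩⟩
    obtain ⟨hF, hjF⟩ := Finset.mem_filter.mp hFj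
    refine ⟨F, hF, hjF, fun k hkF => by_contra fun hk => ?_⟩
    obtain ⟨G, hG, hjG, hkG⟩ := hsep j hj k hk
    have hFG : F ⊆ G := (hc.total hF hG).elim id fun hGF =>
      hmin (Finset.mem_filter.mpr ⟨hG, hjG⟩) hGF
    exact hkG (hFG hkF)
  choose! F hF hjF hFH using hleast
  obtain ⟨j₀, hj₀⟩ := hH
  obtain ⟨G, hGmem, hmax⟩ :=
    (𝒞.filter (· ⊆ H)).exists_maximal ⟨F j₀, Finset.mem_filter.mpr ⟨hF j₀ hj₀, hFH j₀ hj₀⟩⟩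
  obtain ⟨hG, hGH⟩ := Finset.mem_filter.mp hGmem
  suffices H ⊆ G from (hGH.antisymm this) ▸ hG
  intro j hj
  have hFG : F j ⊆ G := (hc.total (hF j hj) hG).elim id fun hGF =>
    hmax (Finset.mem_filter.mpr ⟨hF j hj, hFH j hj⟩) hGF
  exact hFG (hjF j hj)

lemma mem_of_proj_indic_mem_flagCone {𝒞 : Finset (Set α)}
    (hc : IsChain (· ⊆ ·) (𝒞 : Set (Set α))) {H : Set α} (hH : H.Nonempty) (hH' : H ≠ univ)
    (hmem : proj α (indic H) ∈ flagCone 𝒞) : H ∈ 𝒞 := by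
  obtain ⟨c, hc0, hcH⟩ := hmem
  set x : α → ℝ := ∑ F ∈ 𝒞, c F • indic F
  have hx : proj α (indic H) = proj α x := by simp [x, hcH]
  refine mem_of_forall_exists_mem_notMem hc hH hH' fun j hj k hk => by_contra fun hsep => ?_
  push Not at hsep
  -- no member of `𝒞` separates `j` from `k`, so `x j ≤ x k`; but `x j - x k = 1`
  have hle : x j ≤ x k := by
    simp only [x, Finset.sum_apply, Pi.smul_apply, smul_eq_mul]
    refine Finset.sum_le_sum fun F hF => mul_le_mul_of_nonneg_left ?_ (hc0 F)
    simp only [indic_apply]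
    split_ifs with h₁ h₂ <;> first | exact absurd (hsep F hF h₁) h₂ | norm_num
  have := sub_eq_sub_of_proj_eq_proj hx j k
  simp only [indic_apply, hj, hk, if_true, if_false] at this
  linarith

end Cones

section Matroid

variable {α β : Type*} {M : Matroid α}

lemma ProperFlat.ne_univ {F : Set α} (hF : ProperFlat M F) : F ≠ univ :=
  fun h => hF.2.2 (hF.1.subset_ground.antisymm (h ▸ subset_univ M.E))

lemma ProperFlat.nonempty {F : Set α} (hF : ProperFlat M F) : F.Nonempty :=
  hF.2.1

lemma circuit_iff_isCircuit {C : Set α} : Circuit M C ↔ M.IsCircuit C := by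
  rw [Matroid.isCircuit_iff_forall_ssubset]
  rfl

lemma totallyDisconnected_of_forall_not_circuit (h : ∀ C, ¬ Circuit M C) :
    TotallyDisconnected M := by
  intro i _
  have hcomp : component M i ⊆ {i} := by
    rintro j ⟨-, rfl | ⟨C, hC, -⟩⟩
    exacts [rfl, absurd hC (h C)]
  refine csSup_le' ?_
  rintro n ⟨I, hI, -, rfl⟩
  exact (ncard_le_ncard (hI.trans hcomp)).trans (ncard_singleton i).le

lemma totallyDisconnected_of_forall_isFlat_compl_singleton (h : ∀ j, M.IsFlat {j}ᶜ) :
    TotallyDisconnected M := by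
  refine totallyDisconnected_of_forall_not_circuit fun C hC => ?_
  rw [circuit_iff_isCircuit] at hC
  obtain ⟨k, hk⟩ := hC.nonempty
  have hcl := M.closure_subset_closure (sdiff_subset_compl C {k})
    (hC.mem_closure_sdiff_singleton_of_mem hk)
  rw [(h k).closure] at hcl
  exact hcl rfl

lemma Simple.indep_singleton (hs : Simple M) (hE : M.E = univ) (i : α) : M.Indep {i} := by
  simpa using hs i (hE ▸ mem_univ i) i (hE ▸ mem_univ i)

lemma Simple.one_lt_card_of_not_totallyDisconnected [Fintype α] (hs : Simple M)
    (hE : M.E = univ) (h : ¬ TotallyDisconnected M) : 1 < Fintype.card α := by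
  obtain ⟨C, hC⟩ : ∃ C, Circuit M C := by
    by_contra hno
    push Not at hno
    exact h (totallyDisconnected_of_forall_not_circuit hno)
  rw [circuit_iff_isCircuit] at hC
  by_contra hcard
  have : Subsingleton α := Fintype.card_le_one_iff_subsingleton.mp (not_lt.mp hcard)
  obtain ⟨k, hk⟩ := hC.nonempty
  exact hC.dep.not_indep ((hs.indep_singleton hE k).subset fun x _ => Subsingleton.elim x k)

lemma Simple.isFlat_empty (hs : Simple M) (hE : M.E = univ) : M.IsFlat ∅ := by
  rw [Matroid.isFlat_iff_closure_eq, Matroid.closure_empty, eq_empty_iff_forall_notMem]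
  exact fun e he => (Matroid.indep_singleton.mp (hs.indep_singleton hE e)).not_isLoop he

lemma Simple.isFlat_singleton (hs : Simple M) (hE : M.E = univ) (i : α) : M.IsFlat {i} := by
  refine Matroid.isFlat_iff_closure_eq.mpr
    ((subset_singleton_iff.mpr fun e he => by_contra fun hei => ?_).antisymm
      (M.subset_closure {i} (hE ▸ subset_univ _)))
  have hpair := (hs e (hE ▸ mem_univ e) i (hE ▸ mem_univ i)).notMem_closure_sdiff_of_mem
    (mem_insert e ({i} : Set α))
  rw [insert_sdiff_self_of_notMem (mem_singleton_iff.not.mpr hei)] at hpair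
  exact hpair he

lemma Simple.properFlat_singleton [Fintype α] (hs : Simple M) (hE : M.E = univ)
    (hcard : 1 < Fintype.card α) (i : α) : ProperFlat M {i} := by
  refine ⟨hs.isFlat_singleton hE i, singleton_nonempty i, hE ▸ fun h => ?_⟩
  obtain ⟨j, hj⟩ := Fintype.exists_ne_of_one_lt_card hcard i
  exact hj (h ▸ mem_univ j : j ∈ ({i} : Set α))

lemma Simple.isFlat_iff (hs : Simple M) (hE : M.E = univ) {F : Set α} :
    M.IsFlat F ↔ F = ∅ ∨ F = univ ∨ ProperFlat M F := by
  refine ⟨fun hF => ?_, ?_⟩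
  · rcases F.eq_empty_or_nonempty with rfl | hne
    · exact Or.inl rfl
    rcases eq_or_ne F univ with rfl | hFE
    · exact Or.inr (Or.inl rfl)
    · exact Or.inr (Or.inr ⟨hF, hne, hE ▸ hFE⟩)
  · rintro (rfl | rfl | hF)
    exacts [hs.isFlat_empty hE, hE ▸ M.ground_isFlat, hF.1]

lemma image_closure_of_isFlat_iff {M₁ : Matroid α} {M₂ : Matroid β} (hE₁ : M₁.E = univ)
    (hE₂ : M₂.E = univ) (f : α ≃ β) (hflat : ∀ F, M₁.IsFlat F ↔ M₂.IsFlat (f '' F))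
    (X : Set α) : M₂.closure (f '' X) = f '' M₁.closure X := by
  ext y
  obtain ⟨x, rfl⟩ := f.surjective y
  rw [f.injective.mem_set_image, Matroid.mem_closure_iff_forall_mem_isFlat _ (hE₂ ▸ subset_univ _),
    Matroid.mem_closure_iff_forall_mem_isFlat _ (hE₁ ▸ subset_univ _)]
  refine ⟨fun h F hF hXF => ?_, fun h H hH hXH => ?_⟩
  · exact f.injective.mem_set_image.mp (h _ ((hflat F).mp hF) (image_mono hXF))
  · rw [← image_preimage_eq H f.surjective] at hH
    exact h (f ⁻¹' H) ((hflat _).mpr hH) (image_subset_iff.mp hXH)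

lemma isMatroidIso_of_isFlat_iff {M₁ : Matroid α} {M₂ : Matroid β} (hE₁ : M₁.E = univ)
    (hE₂ : M₂.E = univ) (f : α ≃ β) (hflat : ∀ F, M₁.IsFlat F ↔ M₂.IsFlat (f '' F)) :
    IsMatroidIso M₁ M₂ f := by
  refine ⟨by rw [hE₁, hE₂, image_univ_of_surjective f.surjective], fun I _ => ?_⟩
  rw [Matroid.indep_iff_forall_notMem_closure_sdiff (hE₁ ▸ subset_univ I),
    Matroid.indep_iff_forall_notMem_closure_sdiff (hE₂ ▸ subset_univ _), forall_mem_image]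
  refine forall₂_congr fun x _ => ?_
  rw [← image_singleton, ← image_sdiff f.injective, image_closure_of_isFlat_iff hE₁ hE₂ f hflat,
    f.injective.mem_set_image]

end Matroid

section FanIso

variable {V W : Type*} [AddCommGroup V] [Module ℝ V] [AddCommGroup W] [Module ℝ W]

lemma IsFanIso.symm {LV : Set V} {LW : Set W} {S₁ : Set (Set V)} {S₂ : Set (Set W)}
    {e : V ≃ₗ[ℝ] W} (h : IsFanIso LV LW (e : V →ₗ[ℝ] W) S₁ S₂) :
    IsFanIso LW LV (e.symm : W →ₗ[ℝ] V) S₂ S₁ := by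
  obtain ⟨⟨-, hL⟩, himage, hpreimage⟩ := h
  simp only [LinearEquiv.coe_coe] at hL himage hpreimage
  refine ⟨⟨e.symm.bijective, ?_⟩, fun τ hτ => ?_, fun σ hσ => ?_⟩ <;>
    simp only [LinearEquiv.coe_coe]
  · rw [e.image_symm_eq_preimage, ← hL, e.injective.preimage_image]
  · rw [e.image_symm_eq_preimage]
    exact hpreimage τ hτ
  · rw [← e.image_eq_preimage_symm]
    exact himage σ hσ

end FanIso

section FineFanIso

variable {α β : Type*} {M₁ : Matroid α} {M₂ : Matroid β} {e : Amb α ≃ₗ[ℝ] Amb β}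

abbrev IsFineFanEquiv (M₁ : Matroid α) (M₂ : Matroid β) (e : Amb α ≃ₗ[ℝ] Amb β) : Prop :=
  IsFanIso (intLatt α) (intLatt β) (e : Amb α →ₗ[ℝ] Amb β) (fineFan M₁) (fineFan M₂)

lemma IsFineFanEquiv.symm (h : IsFineFanEquiv M₁ M₂ e) : IsFineFanEquiv M₂ M₁ e.symm :=
  IsFanIso.symm h

lemma IsFineFanEquiv.exists_properFlat_smul (h : IsFineFanEquiv M₁ M₂ e) {F : Set α}
    (hF : ProperFlat M₁ F) :
    ∃ H, ProperFlat M₂ H ∧ ∃ t : ℝ, 1 ≤ t ∧ e (proj α (indic F)) = t • proj β (indic H) := by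
  obtain ⟨⟨-, hL⟩, himage, -⟩ := h
  simp only [LinearEquiv.coe_coe] at hL himage
  obtain ⟨𝒟, -, h𝒟, himg⟩ :=
    himage (flagCone {F}) ⟨{F}, by simp, by simpa using hF, rfl⟩
  have hne : e (proj α (indic F)) ≠ 0 :=
    e.map_ne_zero_iff.mpr (proj_indic_ne_zero hF.nonempty hF.ne_univ)
  obtain ⟨H, hH⟩ : 𝒟.Nonempty := by
    rw [Finset.nonempty_iff_ne_empty]
    rintro rfl
    obtain ⟨c, -, hc⟩ : e (proj α (indic F)) ∈ flagCone ∅ :=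
      himg ▸ mem_image_of_mem e (mem_flagCone_of_mem (Finset.mem_singleton_self F))
    exact hne (by simpa using hc)
  have hHF := h𝒟 H hH
  obtain ⟨x, hx, hxH⟩ : proj β (indic H) ∈ e '' flagCone {F} := himg ▸ mem_flagCone_of_mem hH
  rw [flagCone_singleton] at hx
  obtain ⟨s, hs, rfl⟩ := hx
  rw [map_smul] at hxH
  have hs0 : 0 < s := hs.lt_of_ne <| by
    rintro rfl
    rw [zero_smul] at hxH
    exact proj_indic_ne_zero hHF.nonempty hHF.ne_univ hxH.symm
  have heq : e (proj α (indic F)) = s⁻¹ • proj β (indic H) := by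
    rw [← hxH, smul_smul, inv_mul_cancel₀ hs0.ne', one_smul]
  refine ⟨H, hHF, s⁻¹, ?_, heq⟩
  refine one_le_of_smul_proj_indic_mem_intLatt hHF.nonempty hHF.ne_univ (inv_pos.2 hs0) ?_
  rw [← heq, ← hL]
  exact mem_image_of_mem e (proj_indic_mem_intLatt F)

lemma IsFineFanEquiv.exists_properFlat_eq (h : IsFineFanEquiv M₁ M₂ e) {F : Set α}
    (hF : ProperFlat M₁ F) :
    ∃ H, ProperFlat M₂ H ∧ e (proj α (indic F)) = proj β (indic H) := by
  obtain ⟨H, hH, t, ht, hFH⟩ := h.exists_properFlat_smul hF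
  obtain ⟨F', hF', t', ht', hHF'⟩ := h.symm.exists_properFlat_smul hH
  -- `v_F = t t' v_{F'}` forces `t t' ≤ 1`, while both factors are at least `1`
  have hF'F : proj α (indic F) = (t * t') • proj α (indic F') := by
    rw [← e.symm_apply_apply (proj α (indic F)), hFH, map_smul, hHF', smul_smul]
  have htt' := le_one_of_proj_indic_eq_smul hF'.nonempty hF'.ne_univ hF'F
  have ht1 : t = 1 := by nlinarith
  exact ⟨H, hH, by rw [hFH, ht1, one_smul]⟩

lemma IsFineFanEquiv.subset_or_subset
    (h : IsFineFanEquiv M₁ M₂ e) {F₁ F₂ : Set α} (hF₁ : ProperFlat M₁ F₁)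
    (hF₂ : ProperFlat M₁ F₂) (hsub : F₁ ⊆ F₂)
    {H₁ H₂ : Set β} (hH₁ : H₁.Nonempty) (hH₁' : H₁ ≠ univ) (hH₂ : H₂.Nonempty)
    (hH₂' : H₂ ≠ univ) (he₁ : e (proj α (indic F₁)) = proj β (indic H₁))
    (he₂ : e (proj α (indic F₂)) = proj β (indic H₂)) : H₁ ⊆ H₂ ∨ H₂ ⊆ H₁ := by
  obtain ⟨-, himage, -⟩ := h
  simp only [LinearEquiv.coe_coe] at himage
  obtain ⟨𝒟, h𝒟, -, himg⟩ := himage (flagCone {F₁, F₂})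
    ⟨{F₁, F₂}, by simpa using IsChain.pair hsub, by simp [hF₁, hF₂], rfl⟩
  have hmem : ∀ F ∈ ({F₁, F₂} : Finset (Set α)), ∀ H : Set β, H.Nonempty → H ≠ univ →
      e (proj α (indic F)) = proj β (indic H) → H ∈ 𝒟 := fun F hF H hH hH' he =>
    mem_of_proj_indic_mem_flagCone h𝒟 hH hH'
      (himg ▸ he ▸ mem_image_of_mem e (mem_flagCone_of_mem hF))
  rcases eq_or_ne H₁ H₂ with rfl | hne
  · exact Or.inl subset_rfl
  · exact h𝒟 (hmem F₁ (by simp) H₁ hH₁ hH₁' he₁) (hmem F₂ (by simp) H₂ hH₂ hH₂' he₂) hne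

lemma IsFineFanEquiv.mem_of_mem_of_map_singleton
    (h : IsFineFanEquiv M₁ M₂ e) {x : α} {F : Set α} (hx : ProperFlat M₁ {x})
    (hF : ProperFlat M₁ F) (hxF : x ∈ F)
    {y : β} {G : Set β} (hG : G.Nonempty) (hG' : G ≠ univ) (hy : ({y} : Set β) ≠ univ)
    (hxG : e (proj α (indic {x})) = proj β (indic G))
    (hFy : e (proj α (indic F)) = proj β (indic {y})) : y ∈ G := by
  rcases h.subset_or_subset hx hF (singleton_subset_iff.mpr hxF) hG hG'
    (singleton_nonempty y) hy hxG hFy with hGy | hyG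
  · obtain ⟨z, hz⟩ := hG
    rwa [← mem_singleton_iff.mp (hGy hz)]
  · exact hyG rfl

end FineFanIso

section Induced

variable {α β : Type*} [Fintype α] [Fintype β] {M₁ : Matroid α} {M₂ : Matroid β}
  {e : Amb α ≃ₗ[ℝ] Amb β}

lemma map_proj_indic_image (g : Amb α →ₗ[ℝ] Amb β) (f : α ≃ β)
    (hg : ∀ i, g (proj α (indic {i})) = proj β (indic {f i})) (F : Set α) :
    g (proj α (indic F)) = proj β (indic (f '' F)) := by
  rw [proj_indic_eq_sum, map_sum, proj_indic_eq_sum, toFinset_image,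
    Finset.sum_image fun _ _ _ _ hij => f.injective hij]
  exact Finset.sum_congr rfl fun i _ => hg i

lemma IsFineFanEquiv.properFlat_image (h : IsFineFanEquiv M₁ M₂ e) (f : α ≃ β)
    (hf : ∀ i, e (proj α (indic {i})) = proj β (indic {f i})) {F : Set α}
    (hF : ProperFlat M₁ F) : ProperFlat M₂ (f '' F) := by
  obtain ⟨H, hH, hFH⟩ := h.exists_properFlat_eq hF
  have hne : f '' F ≠ univ := fun hF' => hF.ne_univ (by
    rw [← f.preimage_image F, hF', preimage_univ])
  have hFH' : f '' F = H := eq_of_proj_indic_eq_proj_indic (hF.nonempty.image f) hne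
    (by rw [← map_proj_indic_image (e : Amb α →ₗ[ℝ] Amb β) f hf, LinearEquiv.coe_coe, hFH])
  exact hFH' ▸ hH

lemma IsFineFanEquiv.isMatroidIso (h : IsFineFanEquiv M₁ M₂ e)
    (hs₁ : Simple M₁) (hs₂ : Simple M₂) (hE₁ : M₁.E = univ) (hE₂ : M₂.E = univ) (f : α ≃ β)
    (hf : ∀ i, e (proj α (indic {i})) = proj β (indic {f i})) : IsMatroidIso M₁ M₂ f := by
  have hf' : ∀ j, e.symm (proj β (indic {j})) = proj α (indic {f.symm j}) := fun j =>
    e.symm_apply_eq.mpr (by rw [hf, f.apply_symm_apply])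
  refine isMatroidIso_of_isFlat_iff hE₁ hE₂ f fun F => ?_
  have hproper : ProperFlat M₁ F ↔ ProperFlat M₂ (f '' F) :=
    ⟨h.properFlat_image f hf, fun hF => by simpa using h.symm.properFlat_image f.symm hf' hF⟩
  rw [hs₁.isFlat_iff hE₁, hs₂.isFlat_iff hE₂, hproper, image_eq_empty,
    ← image_univ_of_surjective f.surjective, f.injective.image_injective.eq_iff]

end Induced

section Counting

variable {α β : Type*} [Fintype β]

lemma exists_equiv_of_existsUnique [Fintype α] (hcard : Fintype.card α = Fintype.card β)
    {P : α → β → Prop} (hP : ∀ i, ∃! j, P i j) (hinj : ∀ i k, (∀ j, P i j ↔ P k j) → i = k) :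
    ∃ f : α ≃ β, ∀ i j, P i j ↔ f i = j := by
  choose f hf hfu using hP
  have hPf : ∀ i j, P i j ↔ f i = j := fun i j => ⟨fun h => (hfu i j h).symm, fun h => h ▸ hf i⟩
  have hfinj : Function.Injective f := fun i k hik => hinj i k fun j => by rw [hPf, hPf, hik]
  exact ⟨Equiv.ofBijective f ((Fintype.bijective_iff_injective_and_card f).mpr ⟨hfinj, hcard⟩),
    hPf⟩

variable {R : α → β → Prop}

lemma card_filter_eq_of_card_inter_add_one
    (hR : ∀ i k, i ≠ k → #{j | R i j ∧ R k j} + 1 = #{j | R i j}) (i k : α) :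
    #{j | R i j} = #{j | R k j} := by
  rcases eq_or_ne i k with rfl | hik
  · rfl
  rw [← hR i k hik, ← hR k i hik.symm]
  simp_rw [and_comm]

lemma eq_of_forall_iff_of_card_inter_add_one
    (hR : ∀ i k, i ≠ k → #{j | R i j ∧ R k j} + 1 = #{j | R i j}) {i k : α}
    (h : ∀ j, R i j ↔ R k j) : i = k := by
  by_contra hik
  have := hR i k hik
  have heq : Finset.univ.filter (fun j => R i j ∧ R k j) = Finset.univ.filter (fun j => R i j) :=
    Finset.filter_congr fun j _ => and_iff_left_of_imp (h j).mp
  rw [heq] at this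
  omega

lemma exists_equiv_of_card_inter_add_one [Fintype α] (hcard : Fintype.card α = Fintype.card β)
    (hα : 1 < Fintype.card α) (hR : ∀ i k, i ≠ k → #{j | R i j ∧ R k j} + 1 = #{j | R i j})
    (hR' : ∀ j l, j ≠ l → #{i | R i j ∧ R i l} + 1 = #{i | R i j}) :
    (∃ f : α ≃ β, ∀ i j, R i j ↔ f i = j) ∨ ∃ f : α ≃ β, ∀ i j, R i j ↔ f i ≠ j := by
  obtain ⟨i₀⟩ : Nonempty α := Fintype.card_pos_iff.mp (by omega)
  obtain ⟨j₀⟩ : Nonempty β := Fintype.card_pos_iff.mp (by omega)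
  obtain ⟨k₀, hk₀⟩ := Fintype.exists_ne_of_one_lt_card hα i₀
  set r := #{j | R i₀ j}
  have hrow : ∀ i, #{j | R i j} = r := fun i => card_filter_eq_of_card_inter_add_one hR i i₀
  have hcol : ∀ j, #{i | R i j} = #{i | R i j₀} := fun j =>
    card_filter_eq_of_card_inter_add_one (R := fun j i => R i j) hR' j j₀
  have hr : 1 ≤ r := by have := hR i₀ k₀ hk₀.symm; omega
  -- every row and every column has `r` elements: count the incidences
  have hcol' : ∀ j, #{i | R i j} = r := by
    have := Finset.card_mul_eq_card_mul R (s := Finset.univ) (t := Finset.univ)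
      (fun i _ => hrow i) (fun j _ => hcol j)
    simp only [Finset.card_univ, hcard] at this
    exact fun j => (hcol j).trans (Nat.eq_of_mul_eq_mul_left (by omega) this).symm
  -- count the pairs `(i, j)` with `i ≠ i₀` and `j` in the rows of both `i` and `i₀`
  have hpair : (Fintype.card α - 1) * (r - 1) = r * (r - 1) := by
    have := Finset.card_mul_eq_card_mul R (s := Finset.univ.erase i₀) (t := {j | R i₀ j})
      (m := r - 1) (n := r - 1) (fun i hi => ?_) (fun j hj => ?_)
    · rwa [Finset.card_erase_of_mem (Finset.mem_univ i₀), Finset.card_univ] at this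
    · have := hR i₀ i (Finset.ne_of_mem_erase hi).symm
      rw [Finset.bipartiteAbove, Finset.filter_filter]
      omega
    · rw [Finset.bipartiteBelow, Finset.filter_erase,
        Finset.card_erase_of_mem (by simpa using (Finset.mem_filter.mp hj).2), hcol' j]
  have hcases : r = 1 ∨ r = Fintype.card α - 1 := by
    rcases eq_or_ne r 1 with h1 | h1
    · exact Or.inl h1
    · exact Or.inr (Nat.eq_of_mul_eq_mul_right (by omega : 0 < r - 1) hpair).symm
  have hinj : ∀ i k, (∀ j, R i j ↔ R k j) → i = k := fun i k =>
    eq_of_forall_iff_of_card_inter_add_one hR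
  rcases hcases with h1 | hn
  · refine Or.inl (exists_equiv_of_existsUnique hcard (fun i => ?_) hinj)
    rw [Fintype.existsUnique_iff_card_one, hrow i, h1]
  · have hcompl : ∀ i, ∃! j, ¬ R i j := fun i => by
      have := Finset.card_filter_add_card_filter_not (s := Finset.univ) (fun j => R i j)
      rw [Finset.card_univ, hrow i, ← hcard] at this
      rw [Fintype.existsUnique_iff_card_one]
      omega
    obtain ⟨f, hf⟩ := exists_equiv_of_existsUnique hcard hcompl
      fun i k h => hinj i k fun j => not_iff_not.mp (h j)
    exact Or.inr ⟨f, fun i j => by rw [Ne, ← hf, not_not]⟩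

end Counting

section Incidence

variable {α β : Type*} [Fintype β]

lemma card_inter_add_one_of_map_proj_indic (ψ : Amb β →ₗ[ℝ] Amb α) {A : α → Set β}
    (hA : ∀ i, ψ (proj β (indic (A i))) = proj α (indic {i}))
    (hsing : ∀ j, ψ (proj β (indic {j})) = proj α (indic {i | j ∈ A i})) {i k : α}
    (hik : i ≠ k) : #{j | j ∈ A i ∧ j ∈ A k} + 1 = #{j | j ∈ A i} := by
  have h : proj α (indic {i}) = proj α (∑ j ∈ (A i).toFinset, indic {i' | j ∈ A i'}) := by
    rw [← hA i, proj_indic_eq_sum, map_sum, map_sum]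
    exact Finset.sum_congr rfl fun j _ => hsing j
  have := sub_eq_sub_of_proj_eq_proj h i k
  simp only [sum_indic_apply, indic_apply, mem_singleton_iff, hik.symm, if_true, if_false,
    mem_ofPred_eq] at this
  have hi : (A i).toFinset.filter (· ∈ A i) = Finset.univ.filter (· ∈ A i) := by ext; simp
  have hk : (A i).toFinset.filter (· ∈ A k) = Finset.univ.filter fun j => j ∈ A i ∧ j ∈ A k := by
    ext; simp
  rw [hi, hk] at this
  exact_mod_cast (by linarith : ((#{j | j ∈ A i ∧ j ∈ A k} : ℕ) : ℝ) + 1 = #{j | j ∈ A i})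

end Incidence

section Main

variable {α β : Type*} [Fintype α] [Fintype β] {M₁ : Matroid α} {M₂ : Matroid β}
  {e : Amb α ≃ₗ[ℝ] Amb β}

lemma finrank_amb : Module.finrank ℝ (Amb α) = Fintype.card α - 1 := by
  have h : Module.finrank ℝ (Amb α) + Module.finrank ℝ (lineSub α) = Fintype.card α :=
    (lineSub α).finrank_quotient_add_finrank.trans (Module.finrank_fintype_fun_eq_card ℝ)
  rcases isEmpty_or_nonempty α with hα | hα
  · rw [Fintype.card_eq_zero] at h ⊢
    omega
  · have h1 : Module.finrank ℝ (lineSub α) = 1 :=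
      finrank_span_singleton (show (fun _ : α => (1 : ℝ)) ≠ 0 from one_ne_zero)
    omega

lemma IsFineFanEquiv.exists_equiv_or_forall_isFlat_compl (h : IsFineFanEquiv M₁ M₂ e)
    (hs₁ : Simple M₁) (hs₂ : Simple M₂) (hE₁ : M₁.E = univ) (hE₂ : M₂.E = univ)
    (hcard : Fintype.card α = Fintype.card β) (hα : 1 < Fintype.card α) :
    (∃ f : α ≃ β, ∀ i, e (proj α (indic {i})) = proj β (indic {f i})) ∨
      ∀ j, M₂.IsFlat {j}ᶜ := by
  have hpt₁ := hs₁.properFlat_singleton hE₁ hα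
  have hpt₂ := hs₂.properFlat_singleton hE₂ (hcard ▸ hα)
  choose A hA heA using fun i => h.exists_properFlat_eq (hpt₁ i)
  choose B hB heB using fun j => h.symm.exists_properFlat_eq (hpt₂ j)
  have heA' : ∀ i, e.symm (proj β (indic (A i))) = proj α (indic {i}) := fun i => by
    rw [← heA i, e.symm_apply_apply]
  have heB' : ∀ j, e (proj α (indic (B j))) = proj β (indic {j}) := fun j => by
    rw [← heB j, e.apply_symm_apply]
  have hBA : ∀ j, B j = {i | j ∈ A i} := fun j => ext fun i =>
    ⟨fun hi => h.mem_of_mem_of_map_singleton (hpt₁ i) (hB j) hi (hA i).nonempty (hA i).ne_univ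
      (hpt₂ j).ne_univ (heA i) (heB' j),
    fun hj => h.symm.mem_of_mem_of_map_singleton (hpt₂ j) (hA i) hj (hB j).nonempty (hB j).ne_univ
      (hpt₁ i).ne_univ (heB j) (heA' i)⟩
  have hR := fun i k => card_inter_add_one_of_map_proj_indic (e.symm : Amb β →ₗ[ℝ] Amb α)
    (A := A) heA' (fun j => (hBA j) ▸ heB j) (i := i) (k := k)
  have hR' := fun j l => card_inter_add_one_of_map_proj_indic (e : Amb α →ₗ[ℝ] Amb β)
    (A := fun j => {i | j ∈ A i}) (fun j => (hBA j) ▸ heB' j) (fun i => heA i) (i := j) (k := l)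
  rcases exists_equiv_of_card_inter_add_one (R := fun i j => j ∈ A i) hcard hα hR hR' with
    ⟨f, hf⟩ | ⟨f, hf⟩
  · refine Or.inl ⟨f, fun i => ?_⟩
    rw [heA i, show A i = {f i} from ext fun j => (hf i j).trans eq_comm]
  · refine Or.inr fun j => ?_
    rw [show {j}ᶜ = A (f.symm j) from
      ext fun j' => by simpa [ne_comm] using (hf (f.symm j) j').symm]
    exact (hA _).1

end Main

theorem fine_fan_iso_induced_by_matroid_iso_general
    {α β : Type*} [Fintype α] [Fintype β] (M₁ : Matroid α) (M₂ : Matroid β)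
    (hE₁ : M₁.E = Set.univ) (hE₂ : M₂.E = Set.univ)
    (hs₁ : Simple M₁) (hs₂ : Simple M₂)
    (htd₂ : ¬ TotallyDisconnected M₂)
    (φ : Amb α →ₗ[ℝ] Amb β)
    (hφ : IsFanIso (intLatt α) (intLatt β) φ (fineFan M₁) (fineFan M₂)) :
    ∃ f : α ≃ β, IsMatroidIso M₁ M₂ f ∧
      ∀ i : α, φ (proj α (indic {i})) = proj β (indic {f i}) := by
  let e := LinearEquiv.ofBijective φ hφ.1.1
  have h : IsFineFanEquiv M₁ M₂ e := hφ
  have hβ := hs₂.one_lt_card_of_not_totallyDisconnected hE₂ htd₂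
  have hcard : Fintype.card α = Fintype.card β := by
    have := e.finrank_eq
    rw [finrank_amb, finrank_amb] at this
    omega
  rcases h.exists_equiv_or_forall_isFlat_compl hs₁ hs₂ hE₁ hE₂ hcard (hcard ▸ hβ) with
    ⟨f, hf⟩ | hflat
  · exact ⟨f, h.isMatroidIso hs₁ hs₂ hE₁ hE₂ f hf, hf⟩
  · exact absurd (totallyDisconnected_of_forall_isFlat_compl_singleton hflat) htd₂

/-- An isomorphism of fine fan structures of Bergman fans of simple,
not totally disconnected matroids is induced by a matroid isomorphism. -/
theorem fine_fan_iso_induced_by_matroid_iso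
    {α β : Type*} [Fintype α] [Fintype β] (M₁ : Matroid α) (M₂ : Matroid β)
    (hE₁ : M₁.E = Set.univ) (hE₂ : M₂.E = Set.univ)
    (hs₁ : Simple M₁) (hs₂ : Simple M₂)
    (htd₁ : ¬ TotallyDisconnected M₁) (htd₂ : ¬ TotallyDisconnected M₂)
    (φ : Amb α →ₗ[ℝ] Amb β)
    (hφ : IsFanIso (intLatt α) (intLatt β) φ (fineFan M₁) (fineFan M₂)) :
    ∃ f : α ≃ β, IsMatroidIso M₁ M₂ f ∧
      ∀ i : α, φ (proj α (indic {i})) = proj β (indic {f i}) :=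
  fine_fan_iso_induced_by_matroid_iso_general M₁ M₂ hE₁ hE₂ hs₁ hs₂ htd₂ φ hφ

end BergmanFans
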